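/- For every x in [0,1] and every natural number i > 0, ∫_{(2-x)/3^i}^{2/3^i} f(t) dt = (2^(i-1) / 9^i) · (x + ∫_0^x f(t) dt). -/

import Mathlib

/-!
Substituting `t = u / 3` turns the relation `f (x / 3) = (2/3) f x` into
`∫_{a/3}^{b/3} f = (2/9) ∫_a^b f`, and substituting `t = (2 - s) / 3` turns
`f ((2 - x) / 3) = (1 + f x) / 3` into `∫_{(2-x)/3}^{2/3} f = (x + ∫_0^x f) / 9`.
Scaling the second identity `i - 1` times by the first gives the factor `(2/9)^(i-1) / 9`.
-/

open intervalIntegral Set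

lemma integral_div_three_of_map_div_three {f : ℝ → ℝ} {c : ℝ}
    (hf : ∀ x ∈ Icc (0 : ℝ) 1, f (x / 3) = c * f x) {a b : ℝ}
    (ha : a ∈ Icc (0 : ℝ) 1) (hb : b ∈ Icc (0 : ℝ) 1) :
    ∫ t in a / 3..b / 3, f t = c / 3 * ∫ t in a..b, f t := by
  have hsub : ∫ u in a..b, f (u / 3) = ∫ u in a..b, c * f u :=
    integral_congr fun u hu => hf u (uIcc_subset_Icc ha hb hu)
  rw [integral_comp_div _ (by norm_num : (3 : ℝ) ≠ 0), smul_eq_mul,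
    integral_const_mul] at hsub
  linarith

lemma integral_div_three_pow_of_map_div_three {f : ℝ → ℝ} {c : ℝ}
    (hf : ∀ x ∈ Icc (0 : ℝ) 1, f (x / 3) = c * f x) {a b : ℝ}
    (ha : a ∈ Icc (0 : ℝ) 1) (hb : b ∈ Icc (0 : ℝ) 1) (n : ℕ) :
    ∫ t in a / 3 ^ n..b / 3 ^ n, f t = (c / 3) ^ n * ∫ t in a..b, f t := by
  induction n with
  | zero => simp
  | succ n ih =>
    have hdiv : ∀ y ∈ Icc (0 : ℝ) 1, y / 3 ^ n ∈ Icc (0 : ℝ) 1 := fun y ⟨hy0, hy1⟩ =>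
      ⟨by positivity, div_le_one_of_le₀ (hy1.trans (one_le_pow₀ (by norm_num))) (by positivity)⟩
    simp only [pow_succ, ← div_div]
    rw [integral_div_three_of_map_div_three hf (hdiv a ha) (hdiv b hb), ih]
    ring

lemma integral_two_sub_div_three {f : ℝ → ℝ} (hcont : ContinuousOn f (Icc 0 1))
    (hf : ∀ x ∈ Icc (0 : ℝ) 1, f ((2 - x) / 3) = 1 / 3 * (1 + f x))
    {x : ℝ} (hx : x ∈ Icc (0 : ℝ) 1) :
    ∫ t in (2 - x) / 3..2 / 3, f t = 1 / 9 * (x + ∫ t in (0 : ℝ)..x, f t) := by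
  have hint : IntervalIntegrable f MeasureTheory.volume 0 x :=
    (hcont.mono (uIcc_subset_Icc ⟨le_rfl, zero_le_one⟩ hx)).intervalIntegrable
  have hsub : ∫ s in (0 : ℝ)..x, f ((2 - s) / 3) = ∫ s in (0 : ℝ)..x, 1 / 3 * (1 + f s) :=
    integral_congr fun s hs => hf s (uIcc_subset_Icc ⟨le_rfl, zero_le_one⟩ hx hs)
  rw [integral_comp_sub_left (fun u => f (u / 3)) 2,
    integral_comp_div _ (by norm_num : (3 : ℝ) ≠ 0), smul_eq_mul, integral_const_mul,
    integral_add intervalIntegrable_const hint, integral_const, smul_eq_mul] at hsub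
  norm_num at hsub
  linarith

theorem bourbaki_stmt_general (f : ℝ → ℝ)
    (hcont : ContinuousOn f (Set.Icc 0 1))
    (hw1 : ∀ x ∈ Set.Icc (0:ℝ) 1, f (x / 3) = (2/3) * f x)
    (hw2 : ∀ x ∈ Set.Icc (0:ℝ) 1, f ((2 - x) / 3) = (1/3) * (1 + f x)) :
    ∀ x ∈ Set.Icc (0:ℝ) 1, ∀ i : ℕ, 0 < i → ∫ t in ((2 - x) / 3 ^ i)..(2 / 3 ^ i), f t = (2 ^ (i - 1) / 9 ^ i) * (x + ∫ t in (0:ℝ)..x, f t) := by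
  intro x hx i hi
  obtain ⟨n, rfl⟩ : ∃ n, i = n + 1 := ⟨i - 1, by omega⟩
  have hlo : (2 - x) / 3 ∈ Icc (0 : ℝ) 1 := ⟨by linarith [hx.2], by linarith [hx.1]⟩
  have hhi : (2 : ℝ) / 3 ∈ Icc (0 : ℝ) 1 := ⟨by norm_num, by norm_num⟩
  have hscale := integral_div_three_pow_of_map_div_three hw1 hlo hhi n
  rw [integral_two_sub_div_three hcont hw2 hx, div_div, div_div, ← pow_succ'] at hscale
  have hratio : (2 / 3 / 3 : ℝ) ^ n = 2 ^ n / 9 ^ n := by rw [← div_pow]; norm_num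
  rw [hscale, hratio, Nat.add_sub_cancel, pow_succ]
  ring

theorem bourbaki_stmt (f : ℝ → ℝ)
    (hcont : ContinuousOn f (Set.Icc 0 1))
    (h0 : f 0 = 0) (h1 : f 1 = 1)
    (hw1 : ∀ x ∈ Set.Icc (0:ℝ) 1, f (x / 3) = (2/3) * f x)
    (hw2 : ∀ x ∈ Set.Icc (0:ℝ) 1, f ((2 - x) / 3) = (1/3) * (1 + f x))
    (hw3 : ∀ x ∈ Set.Icc (0:ℝ) 1, f ((2 + x) / 3) = 1/3 + (2/3) * f x) :
    ∀ x ∈ Set.Icc (0:ℝ) 1, ∀ i : ℕ, 0 < i → ∫ t in ((2 - x) / 3 ^ i)..(2 / 3 ^ i), f t = (2 ^ (i - 1) / 9 ^ i) * (x + ∫ t in (0:ℝ)..x, f t) :=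
  bourbaki_stmt_general f hcont hw1 hw2
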